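/- arXiv:0710.2665 — 4 statements merged into one kernel-verified Lean document; each statement's English description precedes it below -/
import Mathlib

section
/- Define C^d_{r,i} as the coefficient of z^r in (z+i)(z+i-1)···(z+i-(d-1)). Then C^d_{d-2,i} - C^d_{d-2,i-1} = d(d-1)(-d+2i)/2 for all integers i, so the function i ↦ C^d_{d-2,i} is minimized over 0 ≤ i ≤ d at i = ⌊d/2⌋. -/
/-! Both `P i · (z + i - d)` and `(z + i) · P (i - 1)` equal the falling product of length `d + 1`
starting at `z + i`, where `P i = (z + i)⋯(z + i - (d - 1))`. Comparing the coefficients of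
`z^(d-1)` expresses `C_{d-2,i} - C_{d-2,i-1}` through `C_{d-1,i} = d·i - d(d-1)/2`, the sum of
the constants `i - j`. The difference changes sign at `i = d/2`, so `i ↦ C_{d-2,i}` decreases
up to `⌊d/2⌋` and increases afterwards. -/

/-- `Cc d r i` is the coefficient of `z^r` in `(z+i)(z+i-1)⋯(z+i-(d-1))`. -/
noncomputable def Cc (d r : ℕ) (i : ℤ) : ℤ :=
  (∏ j ∈ Finset.range d, (Polynomial.X + Polynomial.C (i - j))).coeff r

open Polynomial Finset

section

variable {R : Type*} [CommRing R]

theorem coeff_mul_X_add_C_succ (p : R[X]) (a : R) (k : ℕ) :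
    (p * (X + C a)).coeff (k + 1) = p.coeff k + a * p.coeff (k + 1) := by
  simp [mul_add, mul_comm a]

theorem coeff_X_add_C_mul_succ (p : R[X]) (a : R) (k : ℕ) :
    ((X + C a) * p).coeff (k + 1) = p.coeff k + a * p.coeff (k + 1) := by
  rw [mul_comm, coeff_mul_X_add_C_succ]

theorem Finset.prod_X_add_C_coeff_of_card_eq_succ {σ : Type*} (s : Finset σ) (r : σ → R)
    {k : ℕ} (hk : #s = k + 1) : (∏ i ∈ s, (X + C (r i))).coeff k = ∑ i ∈ s, r i := by
  rw [prod_X_add_C_coeff s r (by omega), hk, Nat.add_sub_cancel_left, powersetCard_one, sum_map]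
  simp

theorem prod_range_X_add_C_sub_mul (n : ℕ) (a : R) :
    (∏ j ∈ range n, (X + C (a - j))) * (X + C (a - n)) =
      (X + C a) * ∏ j ∈ range n, (X + C (a - 1 - j)) := by
  rw [← prod_range_succ (fun j : ℕ => X + C (a - j)), prod_range_succ', mul_comm]
  simp [sub_sub, add_comm]

end

theorem Int.apply_le_of_antitone_below_monotone_above {β : Type*} [Preorder β] {f : ℤ → β}
    {m : ℤ} (hdown : ∀ a, a + 1 ≤ m → f (a + 1) ≤ f a)
    (hup : ∀ a, m ≤ a → f a ≤ f (a + 1)) (i : ℤ) : f m ≤ f i := by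
  rcases le_total i m with h | h
  · exact antitoneOn_of_add_one_le Set.ordConnected_Iic (fun a _ _ ha => hdown a ha)
      (Set.mem_Iic.2 h) Set.self_mem_Iic h
  · exact monotoneOn_of_le_add_one Set.ordConnected_Ici (fun a _ ha _ => hup a ha)
      Set.self_mem_Ici (Set.mem_Ici.2 h) h

theorem two_mul_Cc_succ_self (n : ℕ) (i : ℤ) : 2 * Cc (n + 1) n i = (n + 1) * (2 * i - n) := by
  have gauss : (∑ j ∈ range (n + 1), (j : ℤ)) * 2 = ((n : ℤ) + 1) * n := by
    rw [← Nat.cast_sum]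
    exact_mod_cast sum_range_id_mul_two (n + 1)
  rw [Cc, prod_X_add_C_coeff_of_card_eq_succ _ _ (card_range _), sum_sub_distrib, sum_const,
    card_range, nsmul_eq_mul]
  push_cast
  linear_combination -gauss

theorem two_mul_Cc_sub_Cc_sub_one (k : ℕ) (i : ℤ) :
    2 * (Cc (k + 2) k i - Cc (k + 2) k (i - 1)) = (k + 2) * (k + 1) * (2 * i - (k + 2)) := by
  have h : Cc (k + 2) k i + (i - (k + 2 : ℕ)) * Cc (k + 2) (k + 1) i =
      Cc (k + 2) k (i - 1) + i * Cc (k + 2) (k + 1) (i - 1) := by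
    have := congrArg (coeff · (k + 1)) (prod_range_X_add_C_sub_mul (k + 2) i)
    simp only [coeff_mul_X_add_C_succ, coeff_X_add_C_mul_succ] at this
    exact this
  have h0 := two_mul_Cc_succ_self (k + 1) i
  have h1 := two_mul_Cc_succ_self (k + 1) (i - 1)
  push_cast at h h0 h1
  linear_combination 2 * h + i * h1 - (i - (k + 2)) * h0

theorem stmt_4 (d : ℕ) (hd : 2 ≤ d) :
    (∀ i : ℤ, 2 * (Cc d (d - 2) i - Cc d (d - 2) (i - 1)) =
      (d : ℤ) * ((d : ℤ) - 1) * (-(d : ℤ) + 2 * i)) ∧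
    (∀ i : ℤ, 0 ≤ i → i ≤ (d : ℤ) →
      Cc d (d - 2) ((d / 2 : ℕ) : ℤ) ≤ Cc d (d - 2) i) := by
  obtain ⟨k, rfl⟩ := Nat.exists_eq_add_of_le' hd
  simp only [Nat.add_sub_cancel]
  have step (a : ℤ) : 2 * (Cc (k + 2) k (a + 1) - Cc (k + 2) k a) =
      (k + 2) * (k + 1) * (2 * (a + 1) - (k + 2)) := by
    simpa using two_mul_Cc_sub_Cc_sub_one k (a + 1)
  have hD : (0 : ℤ) ≤ (k + 2) * (k + 1) := by positivity
  refine ⟨fun i => by rw [two_mul_Cc_sub_Cc_sub_one]; push_cast; ring, fun i _ _ => ?_⟩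
  refine Int.apply_le_of_antitone_below_monotone_above (fun a ha => ?_) (fun a ha => ?_) i
  · have hneg : 2 * (a + 1) - (k + 2) ≤ 0 := by omega
    linarith [step a, mul_nonpos_of_nonneg_of_nonpos hD hneg]
  · have hpos : 0 ≤ 2 * (a + 1) - (k + 2) := by omega
    linarith [step a, mul_nonneg hD hpos]
end

section
/- Let M_{r,d} = min over 1 ≤ i ≤ d-2 of C^d_{r,i}, where C^d_{r,i} is the coefficient of z^r in (z+i)(z+i-1)···(z+i-(d-1)). Then for d ≥ 3 and 1 ≤ r ≤ d-1, M_{r,d} ≤ 0, with M_{r,d} = 0 only when d = 3 and r = 2. -/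
open Polynomial Finset
open scoped Nat

lemma le_of_forall_le_succ_of_lt {β : Type*} [Preorder β] {f : ℕ → β} {m : ℕ}
    (hf : ∀ i, i + 1 < m → f i ≤ f (i + 1)) {a b : ℕ} (hab : a ≤ b) (hb : b < m) : f a ≤ f b :=
  monotoneOn_of_le_succ Set.ordConnected_Iio (fun i _ _ hi ↦ hf i hi) (hab.trans_lt hb) hb hab

lemma eval_derivative_prod_X_sub_C {K : Type*} [Field K] (m : ℕ) (z : ℕ → K) {x : K}
    (hx : ∀ t < m, x ≠ z t) :
    (derivative (∏ t ∈ range m, (X - C (z t)))).eval x =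
      (∏ t ∈ range m, (X - C (z t))).eval x * ∑ t ∈ range m, (x - z t)⁻¹ := by
  induction m with
  | zero => simp
  | succ n ih =>
    have hxn : x - z n ≠ 0 := sub_ne_zero.mpr (hx n n.lt_succ_self)
    simp only [prod_range_succ, derivative_mul, derivative_X_sub_C, sum_range_succ, eval_add,
      eval_mul, eval_one, eval_sub, eval_X, eval_C, ih fun t ht ↦ hx t (ht.trans n.lt_succ_self)]
    field_simp

lemma eq_C_mul_prod_X_sub_C_of_eval_eq_zero {K : Type*} [Field K] {p : K[X]} {n : ℕ}
    {w : ℕ → K} (hw : Set.InjOn w (range n)) (hp : p.natDegree ≤ n)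
    (hroot : ∀ i < n, p.eval (w i) = 0) :
    p = C (p.coeff n) * ∏ i ∈ range n, (X - C (w i)) := by
  have hWdeg : (∏ i ∈ range n, (X - C (w i))).natDegree = n := by
    rw [natDegree_finsetProd_X_sub_C_eq_card, card_range]
  have hWlead : (∏ i ∈ range n, (X - C (w i))).coeff n = 1 := by
    rw [← (monic_prod_of_monic _ _ fun i _ ↦ monic_X_sub_C (w i)).coeff_natDegree, hWdeg]
  refine eq_of_degree_sub_lt_of_eval_index_eq _ hw ?_ fun i hi ↦ ?_
  · rw [card_range, degree_lt_iff_coeff_zero]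
    intro k hk
    rcases hk.eq_or_lt with rfl | hk
    · rw [coeff_sub, coeff_C_mul, hWlead, mul_one, sub_self]
    · rw [coeff_sub, coeff_C_mul, coeff_eq_zero_of_natDegree_lt (hp.trans_lt hk),
        coeff_eq_zero_of_natDegree_lt (hWdeg.trans_lt hk), mul_zero, sub_zero]
  · rw [hroot i (mem_range.mp hi), eval_mul, eval_prod,
      prod_eq_zero hi (by rw [eval_sub, eval_X, eval_C, sub_self]), mul_zero]

section RootGaps

variable {m : ℕ} {z : ℕ → ℝ} {g : ℝ}

lemma lt_sub_of_sum_inv_sub_eq_zero (hg : 0 ≤ g) (hz : ∀ i, i + 1 < m → g ≤ z (i + 1) - z i)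
    {i : ℕ} (hi : i + 2 < m) {x y : ℝ} (hy : y ∈ Set.Ioo (z i) (z (i + 1)))
    (hx : x ∈ Set.Ioo (z (i + 1)) (z (i + 2))) (hsy : ∑ t ∈ range m, (y - z t)⁻¹ = 0)
    (hsx : ∑ t ∈ range m, (x - z t)⁻¹ = 0) : g < x - y := by
  by_contra! hxy
  have hle : ∀ {a b}, a ≤ b → b < m → z a ≤ z b :=
    le_of_forall_le_succ_of_lt fun t ht ↦ by linarith [hz t ht]
  obtain ⟨n, rfl⟩ : ∃ n, m = n + 1 := ⟨m - 1, by omega⟩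
  have hshift : ∀ t < n, (y - z t)⁻¹ ≤ (x - z (t + 1))⁻¹ := by
    intro t ht
    have hstep : x - z (t + 1) ≤ y - z t := by linarith [hz t (by omega)]
    rcases Nat.lt_or_ge t (i + 1) with h | h
    · have : z (t + 1) ≤ z (i + 1) := hle (by omega) (by omega)
      exact inv_anti₀ (by linarith [hx.1]) hstep
    · have : z (i + 1) ≤ z t := hle h (by omega)
      exact (inv_le_inv_of_neg (by linarith [hy.2]) (by linarith [hy.2])).mpr hstep
  have hfirst : 0 < (x - z 0)⁻¹ := by
    have : z 0 ≤ z (i + 1) := hle (by omega) (by omega)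
    exact inv_pos.mpr (by linarith [hx.1])
  have hlast : (y - z n)⁻¹ < 0 := by
    have : z (i + 1) ≤ z n := hle (by omega) (by omega)
    exact inv_lt_zero.mpr (by linarith [hy.2])
  rw [sum_range_succ] at hsy
  rw [sum_range_succ'] at hsx
  linarith [sum_le_sum fun t ht ↦ hshift t (mem_range.mp ht)]

lemma exists_interlacing_roots_derivative (hz : ∀ i, i + 1 < m → z i < z (i + 1)) :
    ∃ w : ℕ → ℝ, ∀ i, i + 1 < m → w i ∈ Set.Ioo (z i) (z (i + 1)) ∧
      (derivative (∏ t ∈ range m, (X - C (z t)))).eval (w i) = 0 := by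
  have hroot : ∀ t < m, (∏ t ∈ range m, (X - C (z t))).eval (z t) = 0 := fun t ht ↦ by
    rw [eval_prod, prod_eq_zero (mem_range.mpr ht) (by rw [eval_sub, eval_X, eval_C, sub_self])]
  have hrolle : ∀ i, ∃ c, i + 1 < m → c ∈ Set.Ioo (z i) (z (i + 1)) ∧
      (derivative (∏ t ∈ range m, (X - C (z t)))).eval c = 0 := by
    intro i
    by_cases hi : i + 1 < m
    · obtain ⟨c, hc, hc0⟩ := exists_deriv_eq_zero (hz i hi) (Polynomial.continuousOn _)
        ((hroot i (by omega)).trans (hroot (i + 1) hi).symm)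
      exact ⟨c, fun _ ↦ ⟨hc, by rwa [Polynomial.deriv] at hc0⟩⟩
    · exact ⟨0, fun h ↦ absurd h hi⟩
  choose w hw using hrolle
  exact ⟨w, hw⟩

theorem exists_derivative_prod_X_sub_C_eq_of_gap (hg : 0 < g)
    (hz : ∀ i, i + 1 < m → g ≤ z (i + 1) - z i) :
    ∃ w : ℕ → ℝ, (∀ i, i + 1 < m → w i ∈ Set.Ioo (z i) (z (i + 1))) ∧
      (∀ i, i + 2 < m → g < w (i + 1) - w i) ∧
      derivative (∏ t ∈ range m, (X - C (z t))) =
        C (m : ℝ) * ∏ i ∈ range (m - 1), (X - C (w i)) := by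
  set P := ∏ t ∈ range m, (X - C (z t))
  have hle : ∀ {a b}, a ≤ b → b < m → z a ≤ z b :=
    le_of_forall_le_succ_of_lt fun t ht ↦ by linarith [hz t ht]
  obtain ⟨w, hw⟩ := exists_interlacing_roots_derivative (z := z) fun i hi ↦ by linarith [hz i hi]
  have hsum : ∀ i, i + 1 < m → ∑ t ∈ range m, (w i - z t)⁻¹ = 0 := by
    intro i hi
    have hne : ∀ t < m, w i ≠ z t := by
      intro t ht
      rcases Nat.lt_or_ge i t with h | h
      · exact ((hw i hi).1.2.trans_le (hle h ht)).ne
      · exact ((hle h (by omega)).trans_lt (hw i hi).1.1).ne'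
    have hP : P.eval (w i) ≠ 0 := by
      simp only [P, eval_prod, eval_sub, eval_X, eval_C, prod_ne_zero_iff, mem_range]
      exact fun t ht ↦ sub_ne_zero.mpr (hne t ht)
    have := eval_derivative_prod_X_sub_C m z hne
    rw [(hw i hi).2] at this
    exact (mul_eq_zero.mp this.symm).resolve_left hP
  have hwinj : Set.InjOn w (range (m - 1)) := by
    refine StrictMonoOn.injOn fun i hi j hj hij ↦ ?_
    simp only [coe_range, Set.mem_Iio] at hi hj
    calc w i < z (i + 1) := (hw i (by omega)).1.2
      _ ≤ z j := hle hij (by omega)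
      _ < w j := (hw j (by omega)).1.1
  have hPdeg : P.natDegree = m := by
    rw [natDegree_finsetProd_X_sub_C_eq_card, card_range]
  have hlead : (derivative P).coeff (m - 1) = m := by
    rcases m with _ | m
    · simp [P]
    · rw [coeff_derivative, Nat.add_sub_cancel, ← hPdeg,
        (monic_prod_of_monic _ _ fun i _ ↦ monic_X_sub_C (z i)).coeff_natDegree, hPdeg]
      push_cast; ring
  refine ⟨w, fun i hi ↦ (hw i hi).1, fun i hi ↦ ?_, ?_⟩
  · exact lt_sub_of_sum_inv_sub_eq_zero hg.le hz hi (hw i (by omega)).1 (hw (i + 1) hi).1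
      (hsum i (by omega)) (hsum (i + 1) hi)
  · rw [← hlead]
    exact eq_C_mul_prod_X_sub_C_of_eval_eq_zero hwinj
      (hPdeg ▸ natDegree_derivative_le P) fun i hi ↦ (hw i (by omega)).2

theorem exists_iterate_derivative_prod_X_sub_C_eq_of_gap (hg : 0 < g)
    (hz : ∀ i, i + 1 < m → g ≤ z (i + 1) - z i) {r : ℕ} (hr : r < m) :
    ∃ (A : ℝ) (w : ℕ → ℝ), 0 < A ∧ (∀ i, i + 1 < m - r → g ≤ w (i + 1) - w i) ∧
      z 0 ≤ w 0 ∧ w (m - r - 1) ≤ z (m - 1) ∧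
      derivative^[r] (∏ t ∈ range m, (X - C (z t))) = C A * ∏ i ∈ range (m - r), (X - C (w i)) := by
  induction r with
  | zero => exact ⟨1, z, one_pos, hz, le_rfl, le_rfl, by simp⟩
  | succ r ih =>
    obtain ⟨A, w, hA, hw, hw0, hwlast, hP⟩ := ih (by omega)
    obtain ⟨v, hv, hvgap, hdv⟩ := exists_derivative_prod_X_sub_C_eq_of_gap hg hw
    refine ⟨A * (m - r : ℕ), v, mul_pos hA (Nat.cast_pos.mpr (by omega)),
      fun i hi ↦ (hvgap i (by omega)).le, ?_, ?_, ?_⟩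
    · exact hw0.trans (hv 0 (by omega)).1.le
    · have := (hv (m - (r + 1) - 1) (by omega)).2
      rw [show m - (r + 1) - 1 + 1 = m - r - 1 by omega] at this
      exact this.le.trans hwlast
    · rw [Function.iterate_succ_apply', hP, derivative_C_mul, hdv, ← mul_assoc, ← C_mul,
        show m - r - 1 = m - (r + 1) by omega]

end RootGaps

lemma eval_prod_X_sub_C_neg {k j : ℕ} {w : ℕ → ℝ} (hw : ∀ i, i + 1 < k → w i ≤ w (i + 1))
    (hjk : j + 1 < k) (hodd : Odd (k - (j + 1))) {x : ℝ} (hx : x ∈ Set.Ioo (w j) (w (j + 1))) :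
    (∏ i ∈ range k, (X - C (w i))).eval x < 0 := by
  obtain ⟨n, rfl⟩ : ∃ n, k = j + 1 + n := ⟨k - (j + 1), by omega⟩
  rw [Nat.add_sub_cancel_left] at hodd
  rw [eval_prod, prod_range_add _ (j + 1) n]
  simp only [eval_sub, eval_X, eval_C]
  have hleft : 0 < ∏ i ∈ range (j + 1), (x - w i) := prod_pos fun i hi ↦ by
    have : w i ≤ w j := le_of_forall_le_succ_of_lt hw (by simp at hi; omega) (by omega)
    linarith [hx.1]
  have hright : ∏ i ∈ range n, (x - w (j + 1 + i)) = -∏ i ∈ range n, (w (j + 1 + i) - x) := by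
    simp_rw [← neg_sub (w _) x]
    rw [prod_neg, card_range, hodd.neg_one_pow, neg_one_mul]
  have hpos : 0 < ∏ i ∈ range n, (w (j + 1 + i) - x) := prod_pos fun i hi ↦ by
    have : w (j + 1) ≤ w (j + 1 + i) :=
      le_of_forall_le_succ_of_lt hw (by omega) (by simp at hi; omega)
    linarith [hx.2]
  rw [hright]
  exact mul_neg_of_pos_of_neg hleft (neg_neg_of_pos hpos)

lemma exists_nat_eval_prod_X_sub_C_neg {k : ℕ} (hk : 2 ≤ k) {w : ℕ → ℝ} (hw0 : 0 ≤ w 0)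
    (hw : ∀ i, i + 1 < k → 1 < w (i + 1) - w i) :
    ∃ x : ℕ, w 0 < x ∧ (x : ℝ) < w (k - 1) ∧ (∏ i ∈ range k, (X - C (w i))).eval (x : ℝ) < 0 := by
  have hsucc : ∀ i, i + 1 < k → w i ≤ w (i + 1) := fun t ht ↦ by linarith [hw t ht]
  have hle : ∀ {a b}, a ≤ b → b < k → w a ≤ w b := le_of_forall_le_succ_of_lt hsucc
  -- `j ∈ {0, 1}` leaves an odd number of roots above `w (j + 1)`
  set j := k % 2
  have hj : j + 1 < k := by omega
  have hodd : Odd (k - (j + 1)) := Nat.odd_iff.mpr (by omega)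
  have hw0j : w 0 ≤ w j := hle (Nat.zero_le _) (by omega)
  have hx1 : w j < (⌊w j⌋₊ + 1 : ℕ) := by push_cast; exact Nat.lt_floor_add_one _
  have hx2 : ((⌊w j⌋₊ + 1 : ℕ) : ℝ) < w (j + 1) := by
    push_cast; linarith [Nat.floor_le (hw0.trans hw0j), hw j hj]
  exact ⟨⌊w j⌋₊ + 1, hw0j.trans_lt hx1, hx2.trans_le (hle (by omega) (by omega)),
    eval_prod_X_sub_C_neg hsucc hj hodd ⟨hx1, hx2⟩⟩

lemma factorial_mul_Cc (d r : ℕ) (i : ℤ) :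
    (r ! : ℝ) * Cc d r i = (derivative^[r] (∏ j ∈ range d, (X - C (j : ℝ)))).eval (i : ℝ) := by
  have hCc : (Cc d r i : ℝ) = (taylor (i : ℝ) (∏ j ∈ range d, (X - C (j : ℝ)))).coeff r := by
    rw [Cc, ← eq_intCast (Int.castRingHom ℝ), ← coeff_map, Polynomial.map_prod, taylor_apply,
      Polynomial.prod_comp]
    congr 1
    refine prod_congr rfl fun j _ ↦ ?_
    rw [Polynomial.map_add, map_X, map_C, sub_comp, X_comp, C_comp]
    simp only [eq_intCast, map_sub, map_intCast, map_natCast]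
    ring
  rw [hCc, taylor_coeff, ← factorial_smul_hasseDeriv, LinearMap.smul_apply, eval_smul,
    nsmul_eq_mul]

lemma Cc_sub_one {d : ℕ} (hd : 0 < d) (i : ℤ) :
    Cc d (d - 1) i = d * i - ∑ j ∈ range d, (j : ℤ) := by
  have hprod : ∏ j ∈ range d, (X + C (i - j)) = ∏ j ∈ range d, (X - C ((j : ℤ) - i)) :=
    prod_congr rfl fun j _ ↦ by rw [← neg_sub, C_neg, ← sub_eq_add_neg]
  have := prod_X_sub_C_coeff_card_pred (range d) (fun j : ℕ ↦ (j : ℤ) - i) (by simpa using hd)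
  rw [card_range] at this
  rw [Cc, hprod, this, sum_sub_distrib, sum_const, card_range, nsmul_eq_mul]
  ring

lemma exists_Cc_neg_of_le_sub_two {d r : ℕ} (hr1 : 1 ≤ r) (hr : r ≤ d - 2) :
    ∃ i : ℕ, 1 ≤ i ∧ i ≤ d - 2 ∧ Cc d r i < 0 := by
  obtain ⟨r, rfl⟩ : ∃ s, r = s + 1 := ⟨r - 1, by omega⟩
  obtain ⟨A, w, hA, hw, hw0, hwlast, hP⟩ := exists_iterate_derivative_prod_X_sub_C_eq_of_gap
    one_pos (m := d) (z := fun j : ℕ ↦ (j : ℝ)) (fun i _ ↦ by push_cast; linarith) (r := r)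
    (by omega)
  obtain ⟨v, hv, hvgap, hdv⟩ := exists_derivative_prod_X_sub_C_eq_of_gap one_pos hw
  rw [show d - r - 1 = d - (r + 1) by omega] at hdv
  have hv0 : 0 ≤ v 0 := by simpa using hw0.trans (hv 0 (by omega)).1.le
  have hvlast : v (d - (r + 1) - 1) < d - 1 := by
    have := (hv (d - (r + 1) - 1) (by omega)).2
    rw [show d - (r + 1) - 1 + 1 = d - r - 1 by omega] at this
    simpa [Nat.cast_sub (by omega : 1 ≤ d)] using this.trans_le hwlast
  obtain ⟨x, hx0, hxlast, hneg⟩ :=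
    exists_nat_eval_prod_X_sub_C_neg (k := d - (r + 1)) (by omega) hv0 fun i hi ↦ hvgap i (by omega)
  refine ⟨x, by exact_mod_cast hv0.trans_lt hx0, ?_, ?_⟩
  · have hx : (x : ℝ) < (d - 1 : ℕ) := by
      rw [Nat.cast_sub (by omega), Nat.cast_one]; exact hxlast.trans hvlast
    have : x < d - 1 := by exact_mod_cast hx
    omega
  · have hder := factorial_mul_Cc d (r + 1) x
    rw [Function.iterate_succ_apply', hP, derivative_C_mul, hdv, ← mul_assoc, ← C_mul, eval_mul,
      eval_C] at hder
    have hA' : (0 : ℝ) < A * (d - r : ℕ) := mul_pos hA (Nat.cast_pos.mpr (by omega))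
    have : ((r + 1) ! : ℝ) * Cc d (r + 1) x < 0 := hder ▸ mul_neg_of_pos_of_neg hA' hneg
    exact_mod_cast neg_of_mul_neg_right this (by positivity)

lemma two_mul_Cc_sub_one_at_one {d : ℕ} (hd : 0 < d) : 2 * Cc d (d - 1) 1 = d * (3 - d) := by
  have hgauss := sum_range_id_mul_two d
  zify [hd] at hgauss
  rw [Cc_sub_one hd]
  linarith

lemma exists_Cc_neg {d r : ℕ} (hd : 3 ≤ d) (hr1 : 1 ≤ r) (hr2 : r ≤ d - 1)
    (hne : ¬(d = 3 ∧ r = 2)) : ∃ i : ℕ, 1 ≤ i ∧ i ≤ d - 2 ∧ Cc d r i < 0 := by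
  rcases Nat.lt_or_ge r (d - 1) with hr | hr
  · exact exists_Cc_neg_of_le_sub_two hr1 (by omega)
  · obtain rfl : r = d - 1 := by omega
    refine ⟨1, le_rfl, by omega, ?_⟩
    have := two_mul_Cc_sub_one_at_one (d := d) (by omega)
    have : (3 : ℤ) < d := by omega
    push_cast
    nlinarith

theorem stmt_7 (d r : ℕ) (hd : 3 ≤ d) (hr1 : 1 ≤ r) (hr2 : r ≤ d - 1) (M : ℤ)
    (hM : IsLeast {x : ℤ | ∃ i : ℕ, 1 ≤ i ∧ i ≤ d - 2 ∧ x = Cc d r (i : ℤ)} M) :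
    M ≤ 0 ∧ (M = 0 → d = 3 ∧ r = 2) := by
  by_cases hexc : d = 3 ∧ r = 2
  · obtain ⟨rfl, rfl⟩ := hexc
    have hzero : Cc 3 2 1 = 0 := by simpa using two_mul_Cc_sub_one_at_one (d := 3) (by norm_num)
    exact ⟨hzero ▸ hM.2 ⟨1, le_rfl, le_rfl, rfl⟩, fun _ ↦ ⟨rfl, rfl⟩⟩
  · obtain ⟨i, hi1, hi2, hneg⟩ := exists_Cc_neg hd hr1 hr2 hexc
    have hMi : M ≤ Cc d r i := hM.2 ⟨i, hi1, hi2, rfl⟩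
    omega
end

section
/- Let Q be a (d-1)-dimensional lattice polytope with h*-coefficients a_i(Q), and let P = Q × [0,m] be the prism of height m ∈ N over Q. Then the h*-coefficients of P satisfy a_i(P) = (mi+1)·a_i(Q) + (m(d-i+1)-1)·a_{i-1}(Q) for 0 ≤ i ≤ d, with the conventions a_d(Q) = a_{-1}(Q) = 0. -/
/-!
The lattice points of `k • (Q × [0, m])` are the pairs of a lattice point of `k • Q` and one of the
`m * k + 1` integers in `[0, m * k]`, so `G_P(k) = (m * k + 1) * G_Q(k)`. On generating functions,
multiplication of the `k`-th coefficient by `k` is the operator `X * d/dX`, so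
`Ehr_P = Ehr_Q + m * X * Ehr_Q'`. Differentiating `Ehr_Q * (1 - X)^d = h*_Q` expresses
`Ehr_Q' * (1 - X)^(d+1)` through `h*_Q` and its derivative, and comparing coefficients gives the
formula.
-/

open scoped Pointwise

/-- The lattice points of a set `S ⊆ ℝ^ι`: points of `S` all of whose
coordinates are integers. -/
def latticePts {ι : Type*} (S : Set (ι → ℝ)) : Set (ι → ℝ) :=
  {x ∈ S | ∀ j, ∃ n : ℤ, x j = n}

/-- A convex lattice polytope: the convex hull of finitely many points with
integer coordinates. -/
def IsLatticePolytope {ι : Type*} (P : Set (ι → ℝ)) : Prop :=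
  ∃ V : Set (ι → ℝ), V.Finite ∧ V.Nonempty ∧ (∀ v ∈ V, ∀ j, ∃ n : ℤ, v j = n) ∧
    P = convexHull ℝ V

/-- The lattice point enumerator `G(kP)`. -/
noncomputable def ehrCount {ι : Type*} (P : Set (ι → ℝ)) (k : ℕ) : ℕ :=
  (latticePts ((k : ℝ) • P)).ncard

def prism {ι : Type*} (Q : Set (ι → ℝ)) (h : ℝ) : Set (ι ⊕ Unit → ℝ) :=
  {z | (fun j => z (Sum.inl j)) ∈ Q ∧ z (Sum.inr ()) ∈ Set.Icc 0 h}

section Prism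

variable {ι : Type*}

lemma smul_prism {c h : ℝ} (hc : 0 ≤ c) (hh : 0 ≤ h) (Q : Set (ι → ℝ)) :
    c • prism Q h = prism (c • Q) (c * h) := by
  ext z
  constructor
  · rintro ⟨p, ⟨hpQ, hp0, hph⟩, rfl⟩
    exact ⟨⟨_, hpQ, rfl⟩, mul_nonneg hc hp0, mul_le_mul_of_nonneg_left hph hc⟩
  · rintro ⟨⟨q, hq, hqz⟩, hz0, hzh⟩
    obtain rfl | hc := hc.eq_or_lt
    · refine ⟨Sum.elim q fun _ => 0, ⟨hq, le_rfl, hh⟩, ?_⟩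
      funext x
      rcases x with j | ⟨⟩
      · exact congrFun hqz j
      · simp only [Pi.smul_apply, Sum.elim_inr, smul_eq_mul, zero_mul] at hzh ⊢
        exact (le_antisymm hzh hz0).symm
    · refine ⟨Sum.elim q fun _ => z (Sum.inr ()) / c,
        ⟨hq, div_nonneg hz0 hc.le, (div_le_iff₀' hc).2 hzh⟩, ?_⟩
      funext x
      rcases x with j | ⟨⟩
      · exact congrFun hqz j
      · exact mul_div_cancel₀ _ hc.ne'

lemma integerPoints_Icc_natCast (n : ℕ) :
    {t : ℝ | t ∈ Set.Icc 0 (n : ℝ) ∧ ∃ z : ℤ, t = z} = (Nat.cast : ℕ → ℝ) '' Set.Iic n := by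
  ext t
  constructor
  · rintro ⟨⟨h0, hn⟩, z, rfl⟩
    lift z to ℕ using (by exact_mod_cast h0)
    exact ⟨z, by exact_mod_cast hn, by simp⟩
  · rintro ⟨k, hk, rfl⟩
    exact ⟨⟨k.cast_nonneg, by exact_mod_cast hk⟩, k, by simp⟩

lemma ncard_latticePts_prism (S : Set (ι → ℝ)) (n : ℕ) :
    (latticePts (prism S n)).ncard = (latticePts S).ncard * (n + 1) := by
  set e : (ι ⊕ Unit → ℝ) → (ι → ℝ) × ℝ := fun z => (fun j => z (Sum.inl j), z (Sum.inr ()))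
  have he : Function.Injective e := by
    intro z w hzw
    funext x
    rcases x with j | ⟨⟩
    · exact congrFun (congrArg Prod.fst hzw) j
    · exact congrArg Prod.snd hzw
  have himage : e '' latticePts (prism S n) =
      latticePts S ×ˢ {t : ℝ | t ∈ Set.Icc 0 (n : ℝ) ∧ ∃ z : ℤ, t = z} := by
    ext ⟨x, t⟩
    constructor
    · rintro ⟨z, ⟨⟨hzS, hzt⟩, hz⟩, hzx⟩
      simp only [e, Prod.mk.injEq] at hzx
      obtain ⟨rfl, rfl⟩ := hzx
      exact ⟨⟨hzS, fun j => hz (Sum.inl j)⟩, hzt, hz (Sum.inr ())⟩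
    · rintro ⟨⟨hxS, hx⟩, htI, ht⟩
      refine ⟨Sum.elim x fun _ => t, ⟨⟨hxS, htI⟩, ?_⟩, rfl⟩
      rintro (j | ⟨⟩)
      exacts [hx j, ht]
  rw [← Set.ncard_image_of_injective _ he, himage, Set.ncard_prod, integerPoints_Icc_natCast,
    Set.ncard_image_of_injective _ Nat.cast_injective, ← Finset.coe_Iic, Set.ncard_coe_finset,
    Nat.card_Iic]

theorem ehrCount_prism (Q : Set (ι → ℝ)) (m k : ℕ) :
    ehrCount (prism Q m) k = (m * k + 1) * ehrCount Q k := by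
  rw [ehrCount, ehrCount, smul_prism k.cast_nonneg m.cast_nonneg, ← Nat.cast_mul,
    ncard_latticePts_prism, mul_comm, mul_comm k]

end Prism

namespace PowerSeries

variable {R : Type*} [CommRing R]

lemma mk_mul_add_one_mul (m : R) (f : ℕ → R) :
    mk (fun k => (m * k + 1) * f k) = mk f + C m * (X * d⁄dX R (mk f)) := by
  ext (_ | n)
  · simp
  · simp only [coeff_mk, map_add, coeff_C_mul, coeff_succ_X_mul, coeff_derivative]
    push_cast
    ring

lemma derivative_mul_one_sub_X_pow_succ (F : R⟦X⟧) (d : ℕ) :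
    d⁄dX R F * (1 - X) ^ (d + 1) =
      (1 - X) * d⁄dX R (F * (1 - X) ^ d) + (d : R⟦X⟧) * (F * (1 - X) ^ d) := by
  rw [Derivation.leibniz, Derivation.leibniz_pow, map_sub, derivative_X,
    Derivation.map_one_eq_zero]
  rcases d with _ | d
  · simp [mul_comm]
  · simp only [add_tsub_cancel_right, zero_sub, smul_eq_mul, nsmul_eq_mul, mul_neg, mul_one]
    push_cast
    ring

lemma coeff_succ_one_sub_X_mul (B : R⟦X⟧) (n : ℕ) :
    coeff (n + 1) ((1 - X) * B) = coeff (n + 1) B - coeff n B := by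
  simp [sub_mul, coeff_succ_X_mul]

lemma coeff_X_mul_derivative (A : R⟦X⟧) (n : ℕ) :
    coeff n (X * d⁄dX R A) = n * coeff n A := by
  rcases n with _ | n
  · simp
  · rw [coeff_succ_X_mul, coeff_derivative, mul_comm]
    push_cast
    ring

lemma coeff_sum_range_C_mul_X_pow (a : ℕ → R) (d n : ℕ) :
    coeff n (∑ i ∈ Finset.range d, C (a i) * X ^ i) = if n < d then a n else 0 := by
  simp [map_sum, coeff_X_pow]

theorem coeff_mk_mul_add_one_mul_one_sub_X_pow (m : R) (f : ℕ → R) (d i : ℕ) :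
    coeff i (mk (fun k => (m * k + 1) * f k) * (1 - X) ^ (d + 1)) =
      (m * i + 1) * coeff i (mk f * (1 - X) ^ d) +
        (m * (d - i + 1) - 1) * (if 1 ≤ i then coeff (i - 1) (mk f * (1 - X) ^ d) else 0) := by
  set A := mk f * (1 - X) ^ d
  have hB : mk (fun k => (m * k + 1) * f k) * (1 - X) ^ (d + 1) =
      (1 - X) * (A + C m * (X * d⁄dX R A)) + C (m * d) * (X * A) := by
    calc mk (fun k => (m * k + 1) * f k) * (1 - X) ^ (d + 1)
        = A * (1 - X) + C m * X * (d⁄dX R (mk f) * (1 - X) ^ (d + 1)) := by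
          rw [mk_mul_add_one_mul, pow_succ]; ring
      _ = _ := by rw [derivative_mul_one_sub_X_pow_succ, map_mul C, map_natCast C]; ring
  rw [hB]
  rcases i with _ | n
  · simp [A]
  · rw [map_add, coeff_succ_one_sub_X_mul, map_add, map_add, coeff_C_mul, coeff_C_mul,
      coeff_X_mul_derivative, coeff_X_mul_derivative, coeff_C_mul, coeff_succ_X_mul]
    simp only [le_add_iff_nonneg_left, zero_le, if_true, Nat.add_sub_cancel]
    push_cast
    ring

end PowerSeries

open PowerSeries

theorem stmt_12_general (d : ℕ) (m : ℕ)
    (Q : Set (Fin (d - 1) → ℝ))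
    (P : Set ((Fin (d - 1) ⊕ Unit) → ℝ))
    (hPdef : P = {z | (fun j => z (Sum.inl j)) ∈ Q ∧
      z (Sum.inr ()) ∈ Set.Icc (0 : ℝ) (m : ℝ)})
    (a b : ℕ → ℚ)
    (ha : PowerSeries.mk (fun k => (ehrCount Q k : ℚ)) * (1 - PowerSeries.X) ^ d =
      ∑ i ∈ Finset.range d, PowerSeries.C (a i) * PowerSeries.X ^ i)
    (hb : PowerSeries.mk (fun k => (ehrCount P k : ℚ)) *
        (1 - PowerSeries.X) ^ (d + 1) =
      ∑ i ∈ Finset.range (d + 1), PowerSeries.C (b i) * PowerSeries.X ^ i) :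
    ∀ i : ℕ, i ≤ d →
      b i = ((m : ℚ) * i + 1) * (if i < d then a i else 0) +
        ((m : ℚ) * ((d : ℚ) - i + 1) - 1) * (if 1 ≤ i then a (i - 1) else 0) := by
  intro i hi
  have hcount : (fun k => (ehrCount P k : ℚ)) = fun k => ((m : ℚ) * k + 1) * ehrCount Q k := by
    subst hPdef
    funext k
    exact_mod_cast ehrCount_prism Q m k
  have hcoeff := coeff_mk_mul_add_one_mul_one_sub_X_pow (m : ℚ) (fun k => (ehrCount Q k : ℚ)) d i
  rw [← hcount, hb, ha, coeff_sum_range_C_mul_X_pow, coeff_sum_range_C_mul_X_pow,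
    coeff_sum_range_C_mul_X_pow, if_pos (Nat.lt_succ_of_le hi)] at hcoeff
  rw [hcoeff]
  split_ifs <;> first | rfl | omega

theorem stmt_12 (d : ℕ) (hd : 1 ≤ d) (m : ℕ) (hm : 1 ≤ m)
    (Q : Set (Fin (d - 1) → ℝ))
    (hQ : IsLatticePolytope Q) (hdimQ : affineSpan ℝ Q = ⊤)
    (P : Set ((Fin (d - 1) ⊕ Unit) → ℝ))
    (hPdef : P = {z | (fun j => z (Sum.inl j)) ∈ Q ∧
      z (Sum.inr ()) ∈ Set.Icc (0 : ℝ) (m : ℝ)})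
    (a b : ℕ → ℚ)
    (ha : PowerSeries.mk (fun k => (ehrCount Q k : ℚ)) * (1 - PowerSeries.X) ^ d =
      ∑ i ∈ Finset.range d, PowerSeries.C (a i) * PowerSeries.X ^ i)
    (hb : PowerSeries.mk (fun k => (ehrCount P k : ℚ)) *
        (1 - PowerSeries.X) ^ (d + 1) =
      ∑ i ∈ Finset.range (d + 1), PowerSeries.C (b i) * PowerSeries.X ^ i) :
    ∀ i : ℕ, i ≤ d →
      b i = ((m : ℚ) * i + 1) * (if i < d then a i else 0) +
        ((m : ℚ) * ((d : ℚ) - i + 1) - 1) * (if 1 ≤ i then a (i - 1) else 0) :=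
  stmt_12_general d m Q P hPdef a b ha hb
end

section
/- If real numbers x_1, ..., x_{d+1} satisfy x_i ≥ 1 for all i and Σ x_i^2 ≥ 2d, then Σ_{i=1}^{d+1} x_i ≥ d + √d. -/
theorem stmt_18 (d : ℕ) (hd : 1 ≤ d) (x : Fin (d + 1) → ℝ)
    (hx : ∀ i, 1 ≤ x i) (hsq : 2 * (d : ℝ) ≤ ∑ i, x i ^ 2) :
    (d : ℝ) + Real.sqrt d ≤ ∑ i, x i := by
  set S := ∑ i, (x i - 1) with hS
  have hS0 : 0 ≤ S := Finset.sum_nonneg fun i _ => by linarith [hx i]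
  have h1 : ∑ i, (x i - 1) ^ 2 ≤ S * S := by
    calc ∑ i, (x i - 1) ^ 2 ≤ ∑ i, (x i - 1) * S := by
          refine Finset.sum_le_sum fun i _ => ?_
          have hle : x i - 1 ≤ S :=
            Finset.single_le_sum (f := fun j => x j - 1) (fun j _ => by show (0:ℝ) ≤ x j - 1; linarith [hx j]) (Finset.mem_univ i)
          nlinarith [hx i]
      _ = S * S := by rw [← Finset.sum_mul]
  have hsum : ∑ i, x i = S + (d + 1) := by
    rw [hS, Finset.sum_sub_distrib]
    simp
  have hexp : ∑ i, (x i - 1) ^ 2 = ∑ i, x i ^ 2 - 2 * (∑ i, x i) + (d + 1) := by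
    have : ∀ i : Fin (d+1), (x i - 1) ^ 2 = x i ^ 2 - 2 * x i + 1 := fun i => by ring
    rw [Finset.sum_congr rfl fun i _ => this i]
    rw [Finset.sum_add_distrib, Finset.sum_sub_distrib, ← Finset.mul_sum]
    simp
  have key : (d : ℝ) ≤ (S + 1) ^ 2 := by nlinarith
  have : Real.sqrt d ≤ S + 1 := by
    calc Real.sqrt d ≤ Real.sqrt ((S + 1) ^ 2) := Real.sqrt_le_sqrt key
      _ = S + 1 := by rw [Real.sqrt_sq (by linarith)]
  linarith
end
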